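/- Let S be an additively reduced semidomain and G a torsion-free abelian group with a compatible linear order. If f = ∑_{i=0}^n s_i x^{g_i} ∈ S[G] with exponents g_0 > g_1 > ⋯ > g_n, all s_i nonzero, n ≥ 1, and 2g_1 < g_0 + g_n, then f is monolithic. -/

import Mathlib

/-! If `f = p * q` with neither factor a monomial, let `A` and `B` be the supports of `p` and `q`.
Since `S` is additively reduced and has no zero divisors, no cancellation occurs in `p * q`, so
`supp f = A + B`. With `aₘ < a₀` the extreme points of `A` and `bₘ < b₀` those of `B`, the exponents
`aₘ + b₀` and `a₀ + bₘ` of `f` lie below `g₀ = a₀ + b₀`, hence are at most `g₁`, so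
`g₀ + gₙ ≤ (a₀ + b₀) + (aₘ + bₘ) = (aₘ + b₀) + (a₀ + bₘ) ≤ 2 • g₁`. -/

/-- Witness that `S` is a semidomain: an injective semiring hom into an integral domain. -/
structure SemidomainWitness (S : Type*) [CommSemiring S] where
  D : Type
  [commRing : CommRing D]
  [isDomain : IsDomain D]
  emb : S →+* D
  inj : Function.Injective emb

/-- `S` is a semidomain, i.e. (isomorphic to) a subsemiring of an integral domain. -/
def IsSemidomain (S : Type*) [CommSemiring S] : Prop := Nonempty (SemidomainWitness S)

/-- `S` is additively reduced: `0` is the only additively invertible element. -/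
def AddReduced (S : Type*) [AddZeroClass S] : Prop := ∀ a b : S, a + b = 0 → a = 0

/-- `s` is an atom of the additive monoid `(S, +)` (for `S` additively reduced):
it is nonzero and cannot be written as a sum of two nonzero elements. -/
def IsAddAtom {S : Type*} [AddZeroClass S] (s : S) : Prop :=
  s ≠ 0 ∧ ∀ a b : S, s = a + b → a = 0 ∨ b = 0

/-- `S` is additively Furstenberg: every nonzero element is divisible in `(S, +)`
by an additive atom. -/
def AddFurstenberg (S : Type*) [AddZeroClass S] : Prop :=
  ∀ s : S, s ≠ 0 → ∃ a t : S, IsAddAtom a ∧ s = a + t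

section GroupAlg
variable {S : Type*} [CommSemiring S] {G : Type*} [AddCommGroup G]

/-- A monomial `s·x^g` in the group semidomain `S[G]`. -/
def IsMonomial (f : AddMonoidAlgebra S G) : Prop :=
  ∃ (g : G) (s : S), f = AddMonoidAlgebra.single g s

/-- `f` is monolithic: every factorization of `f` in `S[G]` has a monomial factor. -/
def Monolithic (f : AddMonoidAlgebra S G) : Prop :=
  f ≠ 0 ∧ ∀ p q : AddMonoidAlgebra S G, f = p * q → IsMonomial p ∨ IsMonomial q

end GroupAlg

open Finset AddMonoidAlgebra
open scoped Pointwise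

lemma IsSemidomain.noZeroDivisors {S : Type*} [CommSemiring S] (hS : IsSemidomain S) :
    NoZeroDivisors S := by
  obtain ⟨W⟩ := hS
  let := W.commRing
  have := W.isDomain
  exact W.inj.noZeroDivisors _ (map_zero _) (map_mul _)

lemma AddReduced.eq_zero_of_sum_eq_zero {S ι : Type*} [AddCommMonoid S] (hred : AddReduced S)
    {t : Finset ι} {F : ι → S} (hsum : ∑ i ∈ t, F i = 0) {i : ι} (hi : i ∈ t) : F i = 0 := by
  classical
  rw [← add_sum_erase t F hi] at hsum
  exact hred _ _ hsum

namespace AddMonoidAlgebra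

variable {S G : Type*}

lemma support_coeff_mul_of_addReduced [Semiring S] [NoZeroDivisors S] [Add G] [DecidableEq G]
    (hred : AddReduced S) (p q : AddMonoidAlgebra S G) :
    (p * q).coeff.support = p.coeff.support + q.coeff.support := by
  refine (support_coeff_mul_subset p q).antisymm fun z hz => ?_
  obtain ⟨x, hx, y, hy, rfl⟩ := Finset.mem_add.1 hz
  rw [Finsupp.mem_support_iff] at hx hy ⊢
  intro hxy
  rw [coeff_mul] at hxy
  have hx' := hred.eq_zero_of_sum_eq_zero hxy (Finsupp.mem_support_iff.2 hx)
  have hy' := hred.eq_zero_of_sum_eq_zero hx' (Finsupp.mem_support_iff.2 hy)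
  exact mul_ne_zero hx hy (by simpa using hy')

lemma support_coeff_sum_single [Semiring S] [DecidableEq G] {ι : Type*} {g : ι → G}
    (hg : g.Injective) {s : ι → S} (hs : ∀ i, s i ≠ 0) (t : Finset ι) :
    (∑ i ∈ t, single (g i) (s i)).coeff.support = t.image g := by
  rw [coeff_sum, Finsupp.support_sum_eq_biUnion]
  · simp only [coeff_single, Finsupp.support_single _ (hs _), biUnion_singleton]
  · intro i j hij
    exact Finsupp.support_single_disjoint (hs i) (hs j) |>.2 (hg.ne hij)

lemma nontrivial_coeff_support_of_not_isMonomial [CommSemiring S] [AddCommGroup G]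
    {p : AddMonoidAlgebra S G} (hp : ¬IsMonomial p) : p.coeff.support.Nontrivial := by
  obtain hempty | hne := p.coeff.support.eq_empty_or_nonempty
  · exact absurd ⟨0, 0, coeff_injective (by simpa using hempty)⟩ hp
  obtain ⟨a, ha⟩ | hnt := hne.exists_eq_singleton_or_nontrivial
  · exact absurd ⟨a, p.coeff a, coeff_injective (Finsupp.support_subset_singleton.1 ha.subset)⟩ hp
  · exact hnt

end AddMonoidAlgebra

lemma Finset.Nontrivial.min'_lt_max' {α : Type*} [LinearOrder α] {s : Finset α}
    (hs : s.Nontrivial) : s.min' hs.nonempty < s.max' hs.nonempty := by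
  obtain ⟨x, hx, y, hy, hxy⟩ := hs
  exact s.min'_lt_max' hx hy hxy

lemma Finset.exists_lt_max'_add_min'_le_two_nsmul {G : Type*} [AddCommMonoid G] [LinearOrder G]
    [IsOrderedCancelAddMonoid G] {A B : Finset G} (hA : A.Nontrivial) (hB : B.Nontrivial) :
    ∃ c ∈ A + B, c < (A + B).max' (hA.nonempty.add hB.nonempty) ∧
      (A + B).max' (hA.nonempty.add hB.nonempty) + (A + B).min' (hA.nonempty.add hB.nonempty)
        ≤ 2 • c := by
  set a₀ := A.max' hA.nonempty
  set b₀ := B.max' hB.nonempty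
  set aₘ := A.min' hA.nonempty
  set bₘ := B.min' hB.nonempty
  have ha₀ : a₀ ∈ A := max'_mem _ _
  have hb₀ : b₀ ∈ B := max'_mem _ _
  have haₘ : aₘ ∈ A := min'_mem _ _
  have hbₘ : bₘ ∈ B := min'_mem _ _
  refine ⟨max (aₘ + b₀) (a₀ + bₘ), ?_, ?_, ?_⟩
  · rcases max_choice (aₘ + b₀) (a₀ + bₘ) with h | h <;> rw [h]
    exacts [add_mem_add haₘ hb₀, add_mem_add ha₀ hbₘ]
  · calc max (aₘ + b₀) (a₀ + bₘ) < a₀ + b₀ :=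
          max_lt (add_lt_add_left hA.min'_lt_max' _) (add_lt_add_right hB.min'_lt_max' _)
      _ ≤ _ := le_max' _ _ (add_mem_add ha₀ hb₀)
  · calc (A + B).max' _ + (A + B).min' _ ≤ (a₀ + b₀) + (aₘ + bₘ) := by
          refine add_le_add (max'_le _ _ _ fun z hz => ?_) (min'_le _ _ (add_mem_add haₘ hbₘ))
          obtain ⟨x, hx, y, hy, rfl⟩ := Finset.mem_add.1 hz
          exact add_le_add (le_max' _ _ hx) (le_max' _ _ hy)
      _ = (aₘ + b₀) + (a₀ + bₘ) := by abel
      _ ≤ 2 • max (aₘ + b₀) (a₀ + bₘ) := by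
          rw [two_nsmul]
          exact add_le_add (le_max_left _ _) (le_max_right _ _)

/-- If `f = ∑_{i=0}^n s_i x^{g_i}` with `g_0 > g_1 > ⋯ > g_n`, all `s_i ≠ 0`, `n ≥ 1`,
and `2g_1 < g_0 + g_n`, then `f` is monolithic. -/
theorem monolithic_of_two_smul_snd_lt
    {S : Type*} [CommSemiring S] {G : Type*} [AddCommGroup G] [LinearOrder G] [IsOrderedAddMonoid G]
    (hS : IsSemidomain S) (hred : AddReduced S)
    (n : ℕ) (hn : 1 ≤ n) (s : Fin (n + 1) → S) (g : Fin (n + 1) → G)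
    (hs : ∀ i, s i ≠ 0) (hg : StrictAnti g)
    (hgap : 2 • g ⟨1, by omega⟩ < g ⟨0, by omega⟩ + g ⟨n, by omega⟩)
    (f : AddMonoidAlgebra S G)
    (hf : f = ∑ i, AddMonoidAlgebra.single (g i) (s i)) :
    Monolithic f := by
  classical
  have := hS.noZeroDivisors
  have hsupp : f.coeff.support = univ.image g := hf ▸ support_coeff_sum_single hg.injective hs _
  refine ⟨fun hf0 => by simp [hf0, univ_eq_empty_iff] at hsupp, fun p q hpq => ?_⟩
  by_contra! ⟨hp, hq⟩
  obtain ⟨c, hc, hc_lt, hc_le⟩ := exists_lt_max'_add_min'_le_two_nsmul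
    (nontrivial_coeff_support_of_not_isMonomial hp) (nontrivial_coeff_support_of_not_isMonomial hq)
  set F := p.coeff.support + q.coeff.support
  have hmem : ∀ x, x ∈ F ↔ ∃ i, g i = x := by
    simp [F, ← support_coeff_mul_of_addReduced hred, ← hpq, hsupp]
  have h_top : g ⟨0, by omega⟩ ≤ F.max' _ := le_max' _ _ ((hmem _).2 ⟨_, rfl⟩)
  obtain ⟨k, hk⟩ := (hmem _).1 (max'_mem _ _)
  obtain ⟨l, hl⟩ := (hmem _).1 (min'_mem _ _)
  obtain ⟨j, rfl⟩ := (hmem c).1 hc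
  have hj : (⟨0, by omega⟩ : Fin (n + 1)) < j :=
    hg.antitone.reflect_lt (hc_lt.trans_le (hk ▸ hg.antitone (Fin.zero_le _)))
  have h_snd : g j ≤ g ⟨1, by omega⟩ := hg.antitone (Fin.le_def.2 (Fin.lt_def.1 hj))
  have h_bot : g ⟨n, by omega⟩ ≤ F.min' _ := (hg.antitone (Fin.le_last l)).trans_eq hl
  refine hgap.not_ge ?_
  calc g ⟨0, _⟩ + g ⟨n, _⟩ ≤ _ := add_le_add h_top h_bot
    _ ≤ 2 • g j := hc_le
    _ ≤ 2 • g ⟨1, _⟩ := nsmul_le_nsmul_right h_snd 2
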